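/- arXiv:2001.09484 — 2 statements merged into one kernel-verified Lean document; each statement's English description precedes it below -/
import Mathlib

section
/- With Ĥ = H^(d) ⊗ diag(1,-1) - H^(a) ⊗ (1/2)[[1,1],[-1,-1]], if H^(d) and H^(a) commute, then Ĥ² = ((H^(d))² - H^(d)H^(a)) ⊗ E, where E is the 2×2 identity matrix. -/
open Kronecker

/-!
Write `σ = diag(1, -1)` and `P = ½ [[1, 1], [-1, -1]]`. Expanding the square of `A ⊗ σ - B ⊗ P`
with commuting `A, B` gives `A² ⊗ σ² - AB ⊗ (σP + Pσ) + B² ⊗ P²`, and `σ² = 1`, `P² = 0`,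
`σP + Pσ = 1`.
-/

namespace Matrix

theorem sub_kronecker {α l m n p : Type*} [NonUnitalNonAssocRing α] (A₁ A₂ : Matrix l m α)
    (B : Matrix n p α) : (A₁ - A₂) ⊗ₖ B = A₁ ⊗ₖ B - A₂ ⊗ₖ B := by
  ext; simp [sub_mul]

variable {R m l : Type*} [CommRing R] [Fintype m] [DecidableEq m] [Fintype l] [DecidableEq l]

theorem kronecker_sub_kronecker_sq_of_commute {A B : Matrix m m R} (hAB : Commute A B)
    (σ P : Matrix l l R) :
    (A ⊗ₖ σ - B ⊗ₖ P) ^ 2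
      = (A ^ 2) ⊗ₖ (σ ^ 2) - (A * B) ⊗ₖ (σ * P + P * σ) + (B ^ 2) ⊗ₖ (P ^ 2) := by
  simp only [sq, sub_mul, mul_sub, ← mul_kronecker_mul, kronecker_add, ← hAB.eq]
  abel

end Matrix

theorem pauliZ_sq : (!![1, 0; 0, -1] : Matrix (Fin 2) (Fin 2) ℝ) ^ 2 = 1 := by
  ext i j; fin_cases i <;> fin_cases j <;> simp [sq]

theorem halfNilpotent_sq :
    ((1 / 2 : ℝ) • !![1, 1; -1, -1] : Matrix (Fin 2) (Fin 2) ℝ) ^ 2 = 0 := by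
  ext i j; fin_cases i <;> fin_cases j <;> simp [sq]

theorem pauliZ_anticomm_halfNilpotent :
    (!![1, 0; 0, -1] : Matrix (Fin 2) (Fin 2) ℝ) * ((1 / 2 : ℝ) • !![1, 1; -1, -1])
      + ((1 / 2 : ℝ) • !![1, 1; -1, -1]) * !![1, 0; 0, -1] = 1 := by
  ext i j; fin_cases i <;> fin_cases j <;> norm_num

theorem stmt_5_general {n : ℕ} (Hd Ha : Matrix (Fin n) (Fin n) ℝ)
    (hcomm : Hd * Ha = Ha * Hd) :
    (Hd ⊗ₖ (!![1, 0; 0, -1] : Matrix (Fin 2) (Fin 2) ℝ)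
      - Ha ⊗ₖ ((1 / 2 : ℝ) • !![1, 1; -1, -1])) ^ 2
    = (Hd ^ 2 - Hd * Ha) ⊗ₖ (1 : Matrix (Fin 2) (Fin 2) ℝ) := by
  rw [Matrix.kronecker_sub_kronecker_sq_of_commute hcomm, pauliZ_sq, halfNilpotent_sq,
    pauliZ_anticomm_halfNilpotent, Matrix.kronecker_zero, add_zero, Matrix.sub_kronecker]

theorem stmt_5 {n : ℕ} (Hd Ha : Matrix (Fin n) (Fin n) ℝ) (hHd : Hd.IsDiag)
    (hcomm : Hd * Ha = Ha * Hd) :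
    (Hd ⊗ₖ (!![1, 0; 0, -1] : Matrix (Fin 2) (Fin 2) ℝ)
      - Ha ⊗ₖ ((1 / 2 : ℝ) • !![1, 1; -1, -1])) ^ 2
    = (Hd ^ 2 - Hd * Ha) ⊗ₖ (1 : Matrix (Fin 2) (Fin 2) ℝ) :=
  stmt_5_general Hd Ha hcomm
end

section
/- Let Ĥ = H^(d) ⊗ diag(1,-1) - H^(a) ⊗ (1/2)[[1,1],[-1,-1]] with H^(d) diagonal. If x̂(t) ∈ ℂ^{2n} satisfies i·dx̂/dt = Ĥ x̂ and x⁺(t), x⁻(t) ∈ ℂⁿ are the vectors of odd- and even-indexed components of x̂(t) respectively, then x(t) := x⁺(t) + x⁻(t) satisfies d²x/dt² = -((H^(d))² - H^(d)H^(a)) x(t). -/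
/-!
Write `x = x⁺ + x⁻` and `y = x⁺ - x⁻`. The two block rows of `Ĥ` combine into
`i x' = H^(d) y` and `i y' = (H^(d) - H^(a)) x`, so differentiating the first equation once more
and substituting the second gives `x'' = -H^(d) (H^(d) - H^(a)) x`.
-/

open Kronecker Matrix

section Blocks

variable {ι K : Type*}

def blockSum [Add K] (v : ι × Fin 2 → K) : ι → K := fun i => v (i, 0) + v (i, 1)

def blockDiff [Sub K] (v : ι × Fin 2 → K) : ι → K := fun i => v (i, 0) - v (i, 1)

lemma blockSum_smul [NonUnitalNonAssocSemiring K] (c : K) (v : ι × Fin 2 → K) :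
    blockSum (c • v) = c • blockSum v := by
  funext i
  simp [blockSum, mul_add]

lemma blockDiff_smul [NonUnitalNonAssocRing K] (c : K) (v : ι × Fin 2 → K) :
    blockDiff (c • v) = c • blockDiff v := by
  funext i
  simp [blockDiff, mul_sub]

variable [Fintype ι] [Field K]

lemma blockSum_mulVec (Hd Ha : Matrix ι ι K) (v : ι × Fin 2 → K) :
    blockSum ((Hd ⊗ₖ !![1, 0; 0, -1] - Ha ⊗ₖ ((1 / 2 : K) • !![1, 1; -1, -1])) *ᵥ v)
      = Hd *ᵥ blockDiff v := by
  funext i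
  simp only [blockSum, blockDiff, mulVec, dotProduct, Fintype.sum_prod_type, Fin.sum_univ_two,
    ← Finset.sum_add_distrib, mul_sub]
  refine Finset.sum_congr rfl fun j _ => ?_
  simp
  ring

lemma blockDiff_mulVec [NeZero (2 : K)] (Hd Ha : Matrix ι ι K) (v : ι × Fin 2 → K) :
    blockDiff ((Hd ⊗ₖ !![1, 0; 0, -1] - Ha ⊗ₖ ((1 / 2 : K) • !![1, 1; -1, -1])) *ᵥ v)
      = (Hd - Ha) *ᵥ blockSum v := by
  funext i
  simp only [blockSum, blockDiff, mulVec, dotProduct, Fintype.sum_prod_type, Fin.sum_univ_two,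
    ← Finset.sum_sub_distrib, mul_add]
  refine Finset.sum_congr rfl fun j _ => ?_
  simp
  field_simp
  ring

end Blocks

section Derivatives

variable {𝕜 𝔸 ι : Type*} [NontriviallyNormedField 𝕜] [NormedRing 𝔸] [NormedAlgebra 𝕜 𝔸]
  {t : 𝕜}

lemma HasDerivAt.blockSum {f : 𝕜 → ι × Fin 2 → 𝔸} {f' : ι × Fin 2 → 𝔸}
    (h : HasDerivAt f f' t) : HasDerivAt (fun s => blockSum (f s)) (blockSum f') t :=
  hasDerivAt_pi.2 fun i => (hasDerivAt_pi.1 h (i, 0)).add (hasDerivAt_pi.1 h (i, 1))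

lemma HasDerivAt.blockDiff {f : 𝕜 → ι × Fin 2 → 𝔸} {f' : ι × Fin 2 → 𝔸}
    (h : HasDerivAt f f' t) : HasDerivAt (fun s => blockDiff (f s)) (blockDiff f') t :=
  hasDerivAt_pi.2 fun i => (hasDerivAt_pi.1 h (i, 0)).sub (hasDerivAt_pi.1 h (i, 1))

lemma HasDerivAt.mulVec {κ : Type*} [Fintype ι] (A : Matrix κ ι 𝔸) {f : 𝕜 → ι → 𝔸}
    {f' : ι → 𝔸} (h : HasDerivAt f f' t) : HasDerivAt (fun s => A *ᵥ f s) (A *ᵥ f') t :=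
  hasDerivAt_pi.2 fun i =>
    HasDerivAt.fun_sum fun j _ => (hasDerivAt_pi.1 h j).const_mul (A i j)

end Derivatives

theorem stmt_15_general {n : ℕ} (Hd Ha : Matrix (Fin n) (Fin n) ℂ)
    (Hhat : Matrix (Fin n × Fin 2) (Fin n × Fin 2) ℂ)
    (hHhat : Hhat = Hd ⊗ₖ (!![1, 0; 0, -1] : Matrix (Fin 2) (Fin 2) ℂ)
      - Ha ⊗ₖ ((1 / 2 : ℂ) • !![1, 1; -1, -1]))
    (xhat : ℝ → (Fin n × Fin 2) → ℂ) (hdiff : Differentiable ℝ xhat)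
    (heq : ∀ t, Complex.I • deriv xhat t = Hhat.mulVec (xhat t)) :
    ∀ t, deriv (deriv fun s => fun i : Fin n => xhat s (i, 0) + xhat s (i, 1)) t
      = -((Hd ^ 2 - Hd * Ha).mulVec fun i : Fin n =>
          xhat t (i, 0) + xhat t (i, 1)) := by
  intro t
  have hxhat (s : ℝ) : HasDerivAt xhat (-Complex.I • Hhat *ᵥ xhat s) s := by
    rw [← heq, smul_smul, neg_mul, Complex.I_mul_I, neg_neg, one_smul]
    exact (hdiff s).hasDerivAt
  have hx (s : ℝ) :
      HasDerivAt (fun s => blockSum (xhat s)) (-Complex.I • Hd *ᵥ blockDiff (xhat s)) s := by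
    simpa only [hHhat, blockSum_smul, blockSum_mulVec] using (hxhat s).blockSum
  have hy : HasDerivAt (fun s => blockDiff (xhat s))
      (-Complex.I • (Hd - Ha) *ᵥ blockSum (xhat t)) t := by
    simpa only [hHhat, blockDiff_smul, blockDiff_mulVec] using (hxhat t).blockDiff
  change deriv (deriv fun s => blockSum (xhat s)) t = _
  rw [funext fun s => (hx s).deriv, ((hy.mulVec Hd).fun_const_smul (-Complex.I)).deriv,
    mulVec_smul, smul_smul, mulVec_mulVec, neg_mul_neg, Complex.I_mul_I, neg_one_smul,
    mul_sub, sq]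
  rfl

theorem stmt_15 {n : ℕ} (Hd Ha : Matrix (Fin n) (Fin n) ℂ) (hHd : Hd.IsDiag)
    (Hhat : Matrix (Fin n × Fin 2) (Fin n × Fin 2) ℂ)
    (hHhat : Hhat = Hd ⊗ₖ (!![1, 0; 0, -1] : Matrix (Fin 2) (Fin 2) ℂ)
      - Ha ⊗ₖ ((1 / 2 : ℂ) • !![1, 1; -1, -1]))
    (xhat : ℝ → (Fin n × Fin 2) → ℂ) (hdiff : Differentiable ℝ xhat)
    (heq : ∀ t, Complex.I • deriv xhat t = Hhat.mulVec (xhat t)) :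
    ∀ t, deriv (deriv fun s => fun i : Fin n => xhat s (i, 0) + xhat s (i, 1)) t
      = -((Hd ^ 2 - Hd * Ha).mulVec fun i : Fin n =>
          xhat t (i, 0) + xhat t (i, 1)) :=
  stmt_15_general Hd Ha Hhat hHhat xhat hdiff heq
end
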